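/- Let S ∈ V with H₀(S,S) = −1 (so ε = +1) and W := {x ∈ V : H₀(S,x) = 0}. Then H₀ restricted to W has signature (3,3), K_S restricts to a paracomplex structure on W (i.e., K_S(W) ⊆ W and K_S² = id on W), and the (+1)-eigenspace and the (−1)-eigenspace of K_S|_W are each 3-dimensional and totally isotropic for H₀. -/

import Mathlib

noncomputable section

noncomputable section

/-- `V = ℝ⁷` with its standard basis. -/
abbrev V7 : Type := Fin 7 → ℝ

/-- Evaluation of the basis 3-form `eⁱ ∧ eʲ ∧ eᵏ` on `(x, y, z)`: the determinant of the
3×3 matrix of the corresponding coordinates. -/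
def tripleDet (i j k : Fin 7) (x y z : V7) : ℝ :=
  x i * (y j * z k - y k * z j) - x j * (y i * z k - y k * z i) + x k * (y i * z j - y j * z i)

/-- The split-generic 3-form `Φ₀ = −e¹∧e⁴∧e⁷ + √2·e¹∧e⁵∧e⁶ + √2·e²∧e³∧e⁷ + e²∧e⁴∧e⁵ + e³∧e⁴∧e⁶`
(indices here are 0-indexed). -/
def Phi0 (x y z : V7) : ℝ :=
  -(tripleDet 0 3 6 x y z) + Real.sqrt 2 * tripleDet 0 4 5 x y z
    + Real.sqrt 2 * tripleDet 1 2 6 x y z + tripleDet 1 3 4 x y z + tripleDet 2 3 5 x y z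

/-- The symmetric bilinear form `H₀` of signature (3,4):
`H₀(E₁,E₇) = H₀(E₂,E₅) = H₀(E₃,E₆) = 1`, `H₀(E₄,E₄) = −1` (1-indexed). -/
def H0 (x y : V7) : ℝ :=
  x 0 * y 6 + x 6 * y 0 + x 1 * y 4 + x 4 * y 1 + x 2 * y 5 + x 5 * y 2 - x 3 * y 3

/-! `K_S` is the split-octonion cross product `u ↦ S × u`. It is `H₀`-skew-adjoint, kills `S`, and
satisfies `S × (S × u) = -H₀(S,S) u + H₀(S,u) S`, so for `H₀(S,S) = -1` it is an involution of
`W = S^⊥`. Skew-adjointness makes the `±1`-eigenspaces totally isotropic; an isotropic subspace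
of `W` meets a negative-definite 3-space of `W` trivially, so each eigenspace has dimension at
most 3, and as together they span the 6-dimensional `W`, both have dimension exactly 3.

For the signature of `W`: the positive 3-space `{(c₀,c₁,c₂,0,c₁,c₂,c₀)}` is projected into `W`
along `S`, which cannot decrease `H₀(x,x)` since `H₀(πx,πx) = H₀(x,x) + H₀(S,x)²`, and the
negative 4-space `{(c₀,c₁,c₂,c₃,-c₁,-c₂,-c₀)}` is cut down to `W`. -/

open Module

namespace LinearMap.BilinForm

section CommRing

variable {R M : Type*} [CommRing R] [AddCommGroup M] [Module R M]

theorem apply_apply_eq_zero_of_isSkewAdjoint {B : LinearMap.BilinForm R M} {K : End R M}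
    (hK : B.IsSkewAdjoint K) {S : M} (hS : K S = 0) (x : M) : B S (K x) = 0 := by
  simpa [hS] using (hK S x).symm

/-- For `B S S = -1`, the projection onto `ker (B S)` along `S`. -/
def orthProj (B : LinearMap.BilinForm R M) (S : M) : End R M :=
  LinearMap.id + (B S).smulRight S

variable {B : LinearMap.BilinForm R M} {S : M}

theorem orthProj_apply (x : M) : orthProj B S x = x + B S x • S := rfl

theorem apply_orthProj (hS : B S S = -1) (x : M) : B S (orthProj B S x) = 0 := by
  simp [orthProj_apply, hS]

theorem orthProj_apply_self (hB : B.IsSymm) (hS : B S S = -1) (x : M) :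
    B (orthProj B S x) (orthProj B S x) = B x x + B S x ^ 2 := by
  simp only [orthProj_apply, map_add, map_smul, LinearMap.add_apply, LinearMap.smul_apply,
    smul_eq_mul, hS, hB.eq x S]
  ring

end CommRing

section Preorder

variable {R M : Type*} [CommRing R] [Preorder R] [AddCommGroup M] [Module R M]
  {B : LinearMap.BilinForm R M}

theorem disjoint_of_pos_of_nonpos {P E : Submodule R M} (hP : ∀ x ∈ P, x ≠ 0 → 0 < B x x)
    (hE : ∀ x ∈ E, x ≠ 0 → B x x ≤ 0) : Disjoint P E := by
  rw [Submodule.disjoint_def]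
  intro x hxP hxE
  by_contra hx
  exact (hP x hxP hx).not_ge (hE x hxE hx)

variable {E : Type*} [AddCommGroup E] [Module R E] {f : E →ₗ[R] M}

theorem injective_of_pos (hf : ∀ c ≠ 0, 0 < B (f c) (f c)) : Function.Injective f := by
  rw [← LinearMap.ker_eq_bot, Submodule.eq_bot_iff]
  intro c hc
  by_contra hc0
  simpa [LinearMap.mem_ker.mp hc] using hf c hc0

theorem pos_of_mem_range (hf : ∀ c ≠ 0, 0 < B (f c) (f c)) {x : M}
    (hx : x ∈ LinearMap.range f) (hx0 : x ≠ 0) : 0 < B x x := by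
  obtain ⟨c, rfl⟩ := hx
  exact hf c fun hc ↦ hx0 (by rw [hc, map_zero])

end Preorder

section Field

variable {R M : Type*} [Field R] [AddCommGroup M] [Module R M] {B : LinearMap.BilinForm R M}

theorem apply_eq_zero_of_mem_eigenspace [NeZero (2 : R)] {K : End R M}
    (hK : B.IsSkewAdjoint K) {μ : R} (hμ : μ ≠ 0) {x y : M}
    (hx : x ∈ K.eigenspace μ) (hy : y ∈ K.eigenspace μ) : B x y = 0 := by
  have h := hK x y
  rw [End.mem_eigenspace_iff] at hx hy
  simp only [Pi.neg_apply, hx, hy, map_smul, map_neg, LinearMap.smul_apply, smul_eq_mul] at h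
  have h2 : (2 * μ) * B x y = 0 := by linear_combination h
  simpa [hμ, two_ne_zero] using h2

theorem eigenspace_le_ker {K : End R M} {S : M} (hK : ∀ x, B S (K x) = 0) {μ : R}
    (hμ : μ ≠ 0) : K.eigenspace μ ≤ LinearMap.ker (B S) := by
  intro x hx
  rw [End.mem_eigenspace_iff] at hx
  have h := hK x
  rw [hx, map_smul, smul_eq_mul] at h
  exact LinearMap.mem_ker.mpr ((mul_eq_zero.mp h).resolve_left hμ)

end Field

end LinearMap.BilinForm

namespace Submodule

variable {K V : Type*} [Field K] [AddCommGroup V] [Module K V] [FiniteDimensional K V]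

theorem finrank_sup_of_disjoint {s t : Submodule K V} (h : Disjoint s t) :
    finrank K ↥(s ⊔ t) = finrank K s + finrank K t := by
  rw [← finrank_sup_add_finrank_inf_eq, h.eq_bot, finrank_bot, add_zero]

theorem finrank_add_finrank_le_of_disjoint_of_le {s t W : Submodule K V} (h : Disjoint s t)
    (hs : s ≤ W) (ht : t ≤ W) : finrank K s + finrank K t ≤ finrank K W :=
  finrank_sup_of_disjoint h ▸ finrank_mono (sup_le hs ht)

end Submodule

theorem LinearMap.BilinForm.finrank_add_finrank_le_of_isotropic {K V : Type*} [Field K]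
    [LinearOrder K] [IsStrictOrderedRing K] [AddCommGroup V] [Module K V] [FiniteDimensional K V]
    {B : LinearMap.BilinForm K V} {E N W : Submodule K V} (hE : ∀ x ∈ E, B x x = 0)
    (hN : ∀ x ∈ N, x ≠ 0 → B x x < 0) (hEW : E ≤ W) (hNW : N ≤ W) :
    finrank K E + finrank K N ≤ finrank K W := by
  refine Submodule.finrank_add_finrank_le_of_disjoint_of_le (Disjoint.symm ?_) hEW hNW
  refine disjoint_of_pos_of_nonpos (B := -B) (fun x hx hx0 ↦ ?_) fun x hx _ ↦ ?_
  · simpa using hN x hx hx0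
  · simp [hE x hx]

namespace Module.End

variable {K V : Type*} [Field K] [NeZero (2 : K)] [AddCommGroup V] [Module K V]

theorem le_eigenspace_one_sup_eigenspace_neg_one {f : End K V} {W : Submodule K V}
    (hf : ∀ x ∈ W, f (f x) = x) : W ≤ f.eigenspace 1 ⊔ f.eigenspace (-1) := by
  intro x hx
  have hx' : x = (2⁻¹ : K) • (x + f x) + (2⁻¹ : K) • (x - f x) := by
    match_scalars <;> field_simp <;> ring
  rw [hx']
  refine Submodule.add_mem_sup ?_ ?_ <;>
    simp only [mem_eigenspace_iff, map_smul, map_add, map_sub, hf x hx] <;> module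

theorem finrank_eigenspace_one_add_finrank_eigenspace_neg_one [FiniteDimensional K V]
    {f : End K V} {W : Submodule K V} (hf : ∀ x ∈ W, f (f x) = x)
    (h₁ : f.eigenspace 1 ≤ W) (h₂ : f.eigenspace (-1) ≤ W) :
    finrank K (f.eigenspace 1) + finrank K (f.eigenspace (-1)) = finrank K W := by
  have hdisj : Disjoint (f.eigenspace 1) (f.eigenspace (-1)) :=
    f.disjoint_genEigenspace (fun h ↦ two_ne_zero (α := K) (by linear_combination h)) 1 1
  have hsup : f.eigenspace 1 ⊔ f.eigenspace (-1) = W :=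
    le_antisymm (sup_le h₁ h₂) (le_eigenspace_one_sup_eigenspace_neg_one hf)
  rw [← hsup, Submodule.finrank_sup_of_disjoint hdisj]

end Module.End

open LinearMap.BilinForm

def H0Form : LinearMap.BilinForm ℝ V7 :=
  LinearMap.mk₂ ℝ H0 (fun _ _ _ ↦ by simp only [H0, Pi.add_apply]; ring)
    (fun _ _ _ ↦ by simp only [H0, Pi.smul_apply, smul_eq_mul]; ring)
    (fun _ _ _ ↦ by simp only [H0, Pi.add_apply]; ring)
    (fun _ _ _ ↦ by simp only [H0, Pi.smul_apply, smul_eq_mul]; ring)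

@[simp] theorem H0Form_apply (x y : V7) : H0Form x y = H0 x y := rfl

theorem H0_comm (x y : V7) : H0 x y = H0 y x := by
  simp only [H0]
  ring

theorem H0Form_isSymm : H0Form.IsSymm := ⟨H0_comm⟩

theorem eq_of_forall_H0_eq {x x' : V7} (h : ∀ y, H0 x y = H0 x' y) : x = x' := by
  funext i
  fin_cases i
  · simpa [H0] using h (Pi.single 6 1)
  · simpa [H0] using h (Pi.single 4 1)
  · simpa [H0] using h (Pi.single 5 1)
  · simpa [H0] using h (Pi.single 3 1)
  · simpa [H0] using h (Pi.single 1 1)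
  · simpa [H0] using h (Pi.single 2 1)
  · simpa [H0] using h (Pi.single 0 1)

theorem finrank_ker_H0Form {S : V7} (hS : H0 S S = -1) :
    finrank ℝ (LinearMap.ker (H0Form S)) = 6 := by
  have hne : H0Form S ≠ 0 := fun h ↦ by simpa [hS] using LinearMap.congr_fun h S
  have h := Module.Dual.finrank_ker_add_one_of_ne_zero hne
  rw [finrank_fin_fun] at h
  omega

theorem Phi0_swap (S x y : V7) : Phi0 S x y = -Phi0 S y x := by
  simp only [Phi0, tripleDet]
  ring

/-- The cross product `S × u`: its coordinates are read off from `H₀(S × u, y) = Φ₀(S, u, y)`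
by taking for `y` the basis vectors. -/
def crossVec (S u : V7) : V7 :=
  ![S 3 * u 0 - S 0 * u 3 - √2 * S 2 * u 1 + √2 * S 1 * u 2,
    -S 3 * u 1 + S 1 * u 3 + √2 * S 5 * u 0 - √2 * S 0 * u 5,
    -S 3 * u 2 + S 2 * u 3 - √2 * S 4 * u 0 + √2 * S 0 * u 4,
    S 6 * u 0 - S 5 * u 2 - S 4 * u 1 + S 2 * u 5 + S 1 * u 4 - S 0 * u 6,
    -S 4 * u 3 + S 3 * u 4 - √2 * S 6 * u 2 + √2 * S 2 * u 6,
    -S 5 * u 3 + S 3 * u 5 + √2 * S 6 * u 1 - √2 * S 1 * u 6,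
    S 6 * u 3 - S 3 * u 6 - √2 * S 5 * u 4 + √2 * S 4 * u 5]

theorem H0_crossVec (S x y : V7) : H0 (crossVec S x) y = Phi0 S x y := by
  simp [H0, Phi0, tripleDet, crossVec]
  ring

theorem crossVec_self (S : V7) : crossVec S S = 0 := by
  funext i
  fin_cases i <;> simp [crossVec] <;> ring

theorem crossVec_crossVec (S x : V7) :
    crossVec S (crossVec S x) = (-H0 S S) • x + H0 S x • S := by
  funext i
  fin_cases i <;> simp [crossVec, H0] <;> ring_nf <;>
    simp only [Real.sq_sqrt, Nat.ofNat_nonneg] <;> ring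

section CrossMap

variable {S : V7} {K : V7 → V7}

theorem eq_crossVec_of_H0_eq_Phi0 (hK : ∀ x y, H0 (K x) y = Phi0 S x y) (x : V7) :
    K x = crossVec S x :=
  eq_of_forall_H0_eq fun y ↦ by rw [hK, H0_crossVec]

theorem isSkewAdjoint_of_H0_eq_Phi0 (hK : ∀ x y, H0 (K x) y = Phi0 S x y) :
    H0Form.IsSkewAdjoint K := fun x y ↦ by
  simp only [H0Form_apply, Pi.neg_apply, map_neg]
  rw [hK, H0_comm x, hK, Phi0_swap]

theorem apply_apply_eq_self_of_H0_eq_Phi0 (hK : ∀ x y, H0 (K x) y = Phi0 S x y)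
    (hS : H0 S S = -1) {x : V7} (hx : H0 S x = 0) : K (K x) = x := by
  rw [eq_crossVec_of_H0_eq_Phi0 hK, eq_crossVec_of_H0_eq_Phi0 hK, crossVec_crossVec, hS, hx]
  simp

end CrossMap

def posFrame : (Fin 3 → ℝ) →ₗ[ℝ] V7 where
  toFun c := ![c 0, c 1, c 2, 0, c 1, c 2, c 0]
  map_add' c d := by funext i; fin_cases i <;> simp
  map_smul' t c := by funext i; fin_cases i <;> simp

def negFrame : (Fin 4 → ℝ) →ₗ[ℝ] V7 where
  toFun c := ![c 0, c 1, c 2, c 3, -c 1, -c 2, -c 0]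
  map_add' c d := by funext i; fin_cases i <;> simp <;> ring
  map_smul' t c := by funext i; fin_cases i <;> simp

theorem H0_posFrame_pos {c : Fin 3 → ℝ} (hc : c ≠ 0) : 0 < H0 (posFrame c) (posFrame c) := by
  obtain ⟨i, hi⟩ := Function.ne_iff.mp hc
  have hsq : H0 (posFrame c) (posFrame c) = 2 * (c 0 ^ 2 + c 1 ^ 2 + c 2 ^ 2) := by
    simp [posFrame, H0]
    ring
  rw [hsq]
  fin_cases i <;> simp at hi <;> positivity

theorem H0_negFrame_neg {c : Fin 4 → ℝ} (hc : c ≠ 0) : H0 (negFrame c) (negFrame c) < 0 := by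
  obtain ⟨i, hi⟩ := Function.ne_iff.mp hc
  have hsq : H0 (negFrame c) (negFrame c) = -(2 * (c 0 ^ 2 + c 1 ^ 2 + c 2 ^ 2) + c 3 ^ 2) := by
    simp [negFrame, H0]
    ring
  rw [hsq, neg_neg_iff_pos]
  fin_cases i <;> simp at hi <;> positivity

theorem exists_signature_ker_H0Form {S : V7} (hS : H0 S S = -1) :
    ∃ P N : Submodule ℝ V7, P ≤ LinearMap.ker (H0Form S) ∧ N ≤ LinearMap.ker (H0Form S) ∧
      finrank ℝ P = 3 ∧ finrank ℝ N = 3 ∧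
      (∀ x ∈ P, x ≠ 0 → 0 < H0 x x) ∧ (∀ x ∈ N, x ≠ 0 → H0 x x < 0) ∧
      P ⊔ N = LinearMap.ker (H0Form S) := by
  set W := LinearMap.ker (H0Form S)
  set f := orthProj H0Form S ∘ₗ posFrame
  have hf : ∀ c ≠ 0, 0 < H0Form (f c) (f c) := fun c hc ↦ by
    rw [LinearMap.comp_apply, orthProj_apply_self H0Form_isSymm hS]
    exact add_pos_of_pos_of_nonneg (H0_posFrame_pos hc) (sq_nonneg _)
  have hg : ∀ c ≠ 0, 0 < (-H0Form) (negFrame c) (negFrame c) := fun c hc ↦ by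
    simpa using H0_negFrame_neg hc
  set N := W ⊓ LinearMap.range negFrame
  have hPW : LinearMap.range f ≤ W := by
    rintro _ ⟨c, rfl⟩
    exact apply_orthProj hS _
  have hPpos : ∀ x ∈ LinearMap.range f, x ≠ 0 → 0 < H0 x x := fun x hx hx0 ↦
    pos_of_mem_range hf hx hx0
  have hNneg : ∀ x ∈ N, x ≠ 0 → H0 x x < 0 := fun x hx hx0 ↦ by
    simpa using pos_of_mem_range hg hx.2 hx0
  have hP : finrank ℝ (LinearMap.range f) = 3 := by
    rw [LinearMap.finrank_range_of_inj (injective_of_pos hf), finrank_fin_fun]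
  have hdisj : Disjoint (LinearMap.range f) N :=
    disjoint_of_pos_of_nonpos (B := H0Form) hPpos fun x hx hx0 ↦ (hNneg x hx hx0).le
  have hN : finrank ℝ N = 3 := by
    have h₁ : _ + finrank ℝ N = _ := Submodule.finrank_sup_add_finrank_inf_eq W _
    have h₂ := (W ⊔ LinearMap.range negFrame).finrank_le
    have h₃ := Submodule.finrank_add_finrank_le_of_disjoint_of_le hdisj hPW inf_le_left
    rw [LinearMap.finrank_range_of_inj (injective_of_pos hg), finrank_fin_fun] at h₁
    rw [finrank_fin_fun] at h₂
    rw [finrank_ker_H0Form hS] at h₁ h₃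
    omega
  refine ⟨_, N, hPW, inf_le_left, hP, hN, hPpos, hNneg, ?_⟩
  apply Submodule.eq_of_le_of_finrank_eq (sup_le hPW inf_le_left)
  rw [Submodule.finrank_sup_of_disjoint hdisj, hP, hN, finrank_ker_H0Form hS]

/-- Let `S ∈ V` with `H₀(S,S) = −1` (so `ε = +1`), and `W := {x : H₀(S,x) = 0}`.  Then
`H₀|_W` has signature (3,3) (there are 3-dimensional positive- and negative-definite subspaces
of `W` which together span `W`); `K_S` restricts to a paracomplex structure on `W`; and the
`(±1)`-eigenspaces of `K_S|_W` are 3-dimensional and totally `H₀`-isotropic. -/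
theorem crossMap_paracomplex (S : V7) (hS : H0 S S = -1)
    (K : V7 →ₗ[ℝ] V7) (hK : ∀ x y : V7, H0 (K x) y = Phi0 S x y) :
    (∃ P N : Submodule ℝ V7,
      (∀ x ∈ P, H0 S x = 0) ∧ (∀ x ∈ N, H0 S x = 0) ∧
      Module.finrank ℝ P = 3 ∧ Module.finrank ℝ N = 3 ∧
      (∀ x ∈ P, x ≠ 0 → 0 < H0 x x) ∧ (∀ x ∈ N, x ≠ 0 → H0 x x < 0) ∧
      (∀ x : V7, H0 S x = 0 → x ∈ P ⊔ N)) ∧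
    (∀ x : V7, H0 S x = 0 → H0 S (K x) = 0 ∧ K (K x) = x) ∧
    Module.finrank ℝ (Module.End.eigenspace K 1) = 3 ∧
    Module.finrank ℝ (Module.End.eigenspace K (-1)) = 3 ∧
    (∀ x ∈ Module.End.eigenspace K 1, ∀ y ∈ Module.End.eigenspace K 1, H0 x y = 0) ∧
    (∀ x ∈ Module.End.eigenspace K (-1), ∀ y ∈ Module.End.eigenspace K (-1), H0 x y = 0) := by
  have hskew := isSkewAdjoint_of_H0_eq_Phi0 hK
  have hKW : ∀ x, H0 S (K x) = 0 := apply_apply_eq_zero_of_isSkewAdjoint hskew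
    (by rw [eq_crossVec_of_H0_eq_Phi0 hK, crossVec_self])
  have hKK : ∀ x ∈ LinearMap.ker (H0Form S), K (K x) = x := fun x hx ↦
    apply_apply_eq_self_of_H0_eq_Phi0 hK hS hx
  have hE : ∀ μ : ℝ, μ ≠ 0 → End.eigenspace K μ ≤ LinearMap.ker (H0Form S) := fun μ hμ ↦
    eigenspace_le_ker hKW hμ
  have hiso : ∀ μ : ℝ, μ ≠ 0 → ∀ x ∈ End.eigenspace K μ, ∀ y ∈ End.eigenspace K μ, H0 x y = 0 :=
    fun μ hμ x hx y hy ↦ apply_eq_zero_of_mem_eigenspace hskew hμ hx hy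
  obtain ⟨P, N, hPW, hNW, hP, hN, hPpos, hNneg, hPN⟩ := exists_signature_ker_H0Form hS
  have hbound : ∀ μ : ℝ, μ ≠ 0 → finrank ℝ (End.eigenspace K μ) + 3 ≤ 6 := fun μ hμ ↦
    hN ▸ finrank_ker_H0Form hS ▸ finrank_add_finrank_le_of_isotropic (B := H0Form)
      (fun x hx ↦ hiso μ hμ x hx x hx) hNneg (hE μ hμ) hNW
  have hsum := End.finrank_eigenspace_one_add_finrank_eigenspace_neg_one hKK
    (hE 1 one_ne_zero) (hE (-1) (by norm_num))
  have h₁ := hbound 1 one_ne_zero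
  have h₂ := hbound (-1) (by norm_num)
  rw [finrank_ker_H0Form hS] at hsum
  exact ⟨⟨P, N, fun x hx ↦ hPW hx, fun x hx ↦ hNW hx, hP, hN, hPpos, hNneg, fun x hx ↦ hPN.ge hx⟩,
    fun x hx ↦ ⟨hKW x, hKK x hx⟩, by omega, by omega, hiso 1 one_ne_zero, hiso (-1) (by norm_num)⟩

end
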